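/- Let L > 0 and let f : [0, L] → ℂ be absolutely continuous with f' ∈ L¹([0, L]). Then for all t ≠ 0, |∫₀^L f(λ) e^{-2iλ²t} dλ| ≤ (|f(0)| + 2∫₀^L |f'(λ)| dλ) · √3 / |t|^{1/2}. -/

import Mathlib

/-!
Writing `f x = f 0 + ∫₀ˣ f'` and exchanging the order of integration turns the integral into
`f 0 * E 0 + ∫₀ᴸ f' s * E s ds`, where `E s = ∫ₛᴸ e^{-2iλ²t} dλ`; so it suffices to bound
every tail `E s` by `√3 / √|t|`. On `[s, c]` the integrand has modulus one, and on `[c, L]`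
one integration by parts against `(-4iλt)⁻¹` gives `1 / (2|t|c)`. The choice
`c = |t|^{-1/2}` yields `3 / (2√|t|) ≤ √3 / √|t|`.
-/

open MeasureTheory intervalIntegral

lemma integral_inv_sq_of_pos {p b : ℝ} (hp : 0 < p) (hpb : p ≤ b) :
    ∫ x in p..b, (x ^ 2)⁻¹ = p⁻¹ - b⁻¹ := by
  have hpos : ∀ x ∈ Set.uIcc p b, 0 < x := fun x hx =>
    hp.trans_le (Set.uIcc_of_le hpb ▸ hx).1
  rw [integral_eq_sub_of_hasDerivAt (f := fun x => -x⁻¹)]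
  · ring
  · exact fun x hx => (hasDerivAt_inv (hpos x hx).ne').neg.congr_deriv (neg_neg _)
  · exact (ContinuousOn.inv₀ (by fun_prop)
      fun x hx => pow_ne_zero 2 (hpos x hx).ne').intervalIntegrable

section primitive

variable {𝕜 : Type*} [RCLike 𝕜] {a b : ℝ} {f g : ℝ → 𝕜}

theorem integral_primitive_mul_eq_integral_mul_integral (hab : a ≤ b)
    (hf : IntervalIntegrable f volume a b) (hg : IntervalIntegrable g volume a b) :
    ∫ x in a..b, (∫ s in a..x, f s) * g x = ∫ s in a..b, f s * ∫ x in s..b, g x := by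
  -- both sides slice the integral of `g x * f s` over the triangle `s ≤ x` of `(a, b]²`
  set μ := volume.restrict (Set.Ioc a b)
  set F : ℝ × ℝ → 𝕜 := {q | q.2 ≤ q.1}.indicator fun q => g q.1 * f q.2
  have hF : Integrable F (μ.prod μ) :=
    (hg.1.mul_prod hf.1).indicator (measurableSet_le measurable_snd measurable_fst)
  have h_left : ∀ x ∈ Set.Ioc a b, (∫ s in a..x, f s) * g x = ∫ s, F (x, s) ∂μ := by
    intro x hx
    have hset : Set.Iic x ∩ Set.Ioc a b = Set.Ioc a x := by
      ext s; simp only [Set.mem_inter_iff, Set.mem_Iic, Set.mem_Ioc]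
      exact ⟨fun h => ⟨h.2.1, h.1⟩, fun h => ⟨h.2, h.1, h.2.trans hx.2⟩⟩
    have hsec : (fun s => F (x, s)) = (Set.Iic x).indicator fun s => g x * f s := by
      ext s; by_cases hs : s ≤ x <;> simp [F, hs]
    rw [hsec, MeasureTheory.integral_indicator measurableSet_Iic,
      Measure.restrict_restrict measurableSet_Iic, hset, MeasureTheory.integral_const_mul,
      ← integral_of_le hx.1.le, mul_comm]
  have h_right : ∀ s ∈ Set.Ioc a b, f s * ∫ x in s..b, g x = ∫ x, F (x, s) ∂μ := by
    intro s hs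
    have hset : Set.Ici s ∩ Set.Ioc a b = Set.Icc s b := by
      ext x; simp only [Set.mem_inter_iff, Set.mem_Ici, Set.mem_Ioc, Set.mem_Icc]
      exact ⟨fun h => ⟨h.1, h.2.2⟩, fun h => ⟨h.1, hs.1.trans_le h.1, h.2⟩⟩
    have hsec : (fun x => F (x, s)) = (Set.Ici s).indicator fun x => g x * f s := by
      ext x; by_cases hx : s ≤ x <;> simp [F, hx]
    rw [hsec, MeasureTheory.integral_indicator measurableSet_Ici,
      Measure.restrict_restrict measurableSet_Ici, hset, integral_Icc_eq_integral_Ioc,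
      MeasureTheory.integral_mul_const, ← integral_of_le hs.2, mul_comm]
  rw [integral_of_le hab, integral_of_le hab, setIntegral_congr_fun measurableSet_Ioc h_left,
    setIntegral_congr_fun measurableSet_Ioc h_right]
  exact integral_integral_swap hF

theorem integral_mul_eq_of_eq_add_primitive {f' : ℝ → 𝕜} (hab : a ≤ b)
    (hf' : IntervalIntegrable f' volume a b) (hg : IntervalIntegrable g volume a b)
    (hf : ∀ x ∈ Set.Icc a b, f x = f a + ∫ s in a..x, f' s) :
    ∫ x in a..b, f x * g x =
      f a * (∫ x in a..b, g x) + ∫ s in a..b, f' s * ∫ x in s..b, g x := by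
  have hprim : ContinuousOn (fun x => ∫ s in a..x, f' s) (Set.uIcc a b) :=
    continuousOn_primitive_interval' hf' Set.left_mem_uIcc
  calc ∫ x in a..b, f x * g x = ∫ x in a..b, (f a * g x + (∫ s in a..x, f' s) * g x) :=
        integral_congr fun x hx => by rw [hf x (Set.uIcc_of_le hab ▸ hx), add_mul]
    _ = _ := by
      rw [integral_add (hg.const_mul _) (hg.continuousOn_mul hprim),
        intervalIntegral.integral_const_mul,
        integral_primitive_mul_eq_integral_mul_integral hab hf' hg]

theorem norm_integral_mul_le_of_eq_add_primitive {f' : ℝ → 𝕜} {K : ℝ} (hab : a ≤ b)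
    (hf' : IntervalIntegrable f' volume a b) (hg : IntervalIntegrable g volume a b)
    (hf : ∀ x ∈ Set.Icc a b, f x = f a + ∫ s in a..x, f' s)
    (hK : ∀ s ∈ Set.Icc a b, ‖∫ x in s..b, g x‖ ≤ K) :
    ‖∫ x in a..b, f x * g x‖ ≤ (‖f a‖ + ∫ s in a..b, ‖f' s‖) * K := by
  have hfirst : ‖f a * ∫ x in a..b, g x‖ ≤ ‖f a‖ * K := by
    rw [norm_mul]; gcongr; exact hK a ⟨le_rfl, hab⟩
  have hrest : ‖∫ s in a..b, f' s * ∫ x in s..b, g x‖ ≤ ∫ s in a..b, ‖f' s‖ * K := by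
    refine norm_integral_le_of_norm_le hab (ae_of_all _ fun s hs => ?_) (hf'.norm.mul_const K)
    rw [norm_mul]
    exact mul_le_mul_of_nonneg_left (hK s (Set.Ioc_subset_Icc_self hs)) (norm_nonneg _)
  rw [integral_mul_eq_of_eq_add_primitive hab hf' hg hf, add_mul,
    ← intervalIntegral.integral_mul_const]
  exact (norm_add_le _ _).trans (add_le_add hfirst hrest)

end primitive

noncomputable def chirp (t l : ℝ) : ℂ := Complex.exp (-2 * Complex.I * (l : ℂ) ^ 2 * (t : ℂ))

section chirp

variable (t : ℝ)

lemma norm_chirp (l : ℝ) : ‖chirp t l‖ = 1 := by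
  have : -2 * Complex.I * (l : ℂ) ^ 2 * (t : ℂ) = ((-2 * l ^ 2 * t : ℝ) : ℂ) * Complex.I := by
    push_cast; ring
  rw [chirp, this, Complex.norm_exp_ofReal_mul_I]

@[fun_prop]
lemma continuous_chirp : Continuous (chirp t) := by
  unfold chirp; fun_prop

lemma hasDerivAt_chirp (l : ℝ) :
    HasDerivAt (chirp t) (-4 * Complex.I * t * l * chirp t l) l :=
  ((((hasDerivAt_pow 2 (l : ℂ)).const_mul (-2 * Complex.I)).mul_const (t : ℂ)).cexp).comp_ofReal
    |>.congr_deriv (by simp only [chirp]; push_cast; ring)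

end chirp

lemma norm_integral_chirp_le_of_pos {t p b : ℝ} (ht : t ≠ 0) (hp : 0 < p) (hpb : p ≤ b) :
    ‖∫ l in p..b, chirp t l‖ ≤ (2 * |t| * p)⁻¹ := by
  have hpos : ∀ x ∈ Set.uIcc p b, (x : ℂ) ≠ 0 := fun x hx => by
    exact_mod_cast (hp.trans_le (Set.uIcc_of_le hpb ▸ hx).1).ne'
  set c : ℂ := (-4 * Complex.I * t)⁻¹
  have hc : ‖c‖ = (4 * |t|)⁻¹ := by simp [c]
  set u : ℝ → ℂ := fun l => c * (l : ℂ)⁻¹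
  set u' : ℝ → ℂ := fun l => c * -((l : ℂ) ^ 2)⁻¹
  have hu : ∀ x ∈ Set.uIcc p b, HasDerivAt u (u' x) x := fun x hx =>
    ((hasDerivAt_inv (hpos x hx)).const_mul c).comp_ofReal
  have hu' : IntervalIntegrable u' volume p b :=
    (ContinuousOn.mul continuousOn_const (ContinuousOn.inv₀ (by fun_prop)
      fun x hx => pow_ne_zero 2 (hpos x hx)).neg).intervalIntegrable
  have hchirp : ∫ l in p..b, chirp t l =
      ∫ l in p..b, u l * (-4 * Complex.I * t * l * chirp t l) := by
    refine integral_congr fun x hx => ?_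
    have hx0 := hpos x hx
    have ht0 : (t : ℂ) ≠ 0 := by exact_mod_cast ht
    simp only [u, c]
    field_simp
  have hboundary : ∀ x, 0 < x → ‖u x * chirp t x‖ = (4 * |t| * x)⁻¹ := fun x hx => by
    simp [u, hc, norm_chirp, abs_of_pos hx, mul_comm]
  have hrest : ‖∫ l in p..b, u' l * chirp t l‖ ≤ (4 * |t|)⁻¹ * (p⁻¹ - b⁻¹) := by
    rw [← integral_inv_sq_of_pos hp hpb, ← intervalIntegral.integral_const_mul]
    refine norm_integral_le_of_norm_le hpb (ae_of_all _ fun x hx => ?_) ?_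
    · simp [u', hc, norm_chirp, abs_of_pos (hp.trans hx.1)]
    · exact (ContinuousOn.mul continuousOn_const (ContinuousOn.inv₀ (by fun_prop)
        fun x hx => pow_ne_zero 2 (by exact_mod_cast hpos x hx))).intervalIntegrable
  rw [hchirp, integral_mul_deriv_eq_deriv_mul hu (fun x _ => hasDerivAt_chirp t x) hu'
    ((by fun_prop : Continuous _).intervalIntegrable _ _)]
  calc _ ≤ ‖u b * chirp t b‖ + ‖u p * chirp t p‖ + ‖∫ l in p..b, u' l * chirp t l‖ :=
        norm_sub_le_of_le (norm_sub_le _ _) le_rfl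
    _ ≤ (4 * |t| * b)⁻¹ + (4 * |t| * p)⁻¹ + (4 * |t|)⁻¹ * (p⁻¹ - b⁻¹) := by
      rw [hboundary b (hp.trans_le hpb), hboundary p hp]; gcongr
    _ = (2 * |t| * p)⁻¹ := by field_simp; ring

lemma norm_integral_chirp_le_add {t a b c : ℝ} (ht : t ≠ 0) (ha : 0 ≤ a) (hab : a ≤ b)
    (hc : 0 < c) : ‖∫ l in a..b, chirp t l‖ ≤ c + (2 * |t| * c)⁻¹ := by
  have htc : 0 < (2 * |t| * c)⁻¹ := by positivity
  have hlength : ∀ p q, p ≤ q → ‖∫ l in p..q, chirp t l‖ ≤ q - p := fun p q hpq => by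
    simpa [abs_of_nonneg (sub_nonneg.2 hpq)] using
      norm_integral_le_of_norm_le_const (a := p) (b := q) fun x _ => (norm_chirp t x).le
  rcases le_total b c with hbc | hcb
  · linarith [hlength a b hab]
  rcases le_total c a with hca | hac
  · calc _ ≤ (2 * |t| * a)⁻¹ := norm_integral_chirp_le_of_pos ht (hc.trans_le hca) hab
      _ ≤ (2 * |t| * c)⁻¹ := by gcongr
      _ ≤ _ := by linarith
  · rw [← integral_add_adjacent_intervals (b := c)
      ((continuous_chirp t).intervalIntegrable _ _) ((continuous_chirp t).intervalIntegrable _ _)]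
    linarith [norm_add_le (∫ l in a..c, chirp t l) (∫ l in c..b, chirp t l),
      hlength a c hac, norm_integral_chirp_le_of_pos ht hc hcb]

lemma norm_integral_chirp_le {t a b : ℝ} (ht : t ≠ 0) (ha : 0 ≤ a) (hab : a ≤ b) :
    ‖∫ l in a..b, chirp t l‖ ≤ √3 / √|t| := by
  set s := √|t|
  have hs : 0 < s := Real.sqrt_pos.2 (abs_pos.2 ht)
  have hs2 : s ^ 2 = |t| := Real.sq_sqrt (abs_nonneg t)
  calc _ ≤ s⁻¹ + (2 * |t| * s⁻¹)⁻¹ := norm_integral_chirp_le_add ht ha hab (by positivity)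
    _ = 3 / 2 / s := by rw [← hs2]; field_simp; ring
    _ ≤ √3 / s := by
      gcongr
      rw [Real.le_sqrt] <;> norm_num

/-- Let `L > 0` and let `f : [0,L] → ℂ` be absolutely continuous with derivative
`f' ∈ L¹([0,L])` (expressed via the fundamental theorem of calculus).  Then for all
`t ≠ 0`, `|∫₀^L f(λ) e^{-2iλ²t} dλ| ≤ (|f(0)| + 2∫₀^L |f'(λ)| dλ) · √3 / |t|^{1/2}`. -/
theorem integral_decay_one_half (L : ℝ) (hL : 0 < L) (f f' : ℝ → ℂ)
    (hf' : IntervalIntegrable f' MeasureTheory.volume 0 L)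
    (hFTC : ∀ x ∈ Set.Icc (0:ℝ) L, f x = f 0 + ∫ s in (0:ℝ)..x, f' s)
    (t : ℝ) (ht : t ≠ 0) :
    ‖∫ l in (0:ℝ)..L, f l * Complex.exp (-2 * Complex.I * (l:ℂ)^2 * (t:ℂ))‖ ≤
      (‖f 0‖ + 2 * ∫ l in (0:ℝ)..L, ‖f' l‖) * Real.sqrt 3 / Real.sqrt |t| := by
  have hbound : ‖∫ l in (0:ℝ)..L, f l * chirp t l‖ ≤
      (‖f 0‖ + ∫ l in (0:ℝ)..L, ‖f' l‖) * (√3 / √|t|) :=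
    norm_integral_mul_le_of_eq_add_primitive hL.le hf'
      ((continuous_chirp t).intervalIntegrable _ _) hFTC
      fun s hs => norm_integral_chirp_le ht hs.1 hs.2
  have hf'_norm : 0 ≤ ∫ l in (0:ℝ)..L, ‖f' l‖ := integral_nonneg hL.le fun _ _ => norm_nonneg _
  rw [mul_div_assoc]
  exact hbound.trans (by gcongr; linarith)
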